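/- arXiv:2101.06095 — 4 statements merged into one kernel-verified Lean document; each statement's English description precedes it below -/
import Mathlib

section
/- Let σ : S¹ → S¹ be a continuous fixed-point-free involution of the circle. Then for any two points p, q on the circle, the pair (p, σ(p)) separates the pair (q, σ(q)); that is, q and σ(q) lie in different arcs determined by p and σ(p). -/
open Set Filter Topology Complex Real

/-- If a continuous map of an open interval into itself has no fixed point and is intertwined
with `σ` via a continuous parametrization `e`, we get a contradiction with `σ` being
fixed-point free: by the sign dichotomy `f` pushes points towards one endpoint, where taking
limits produces a fixed point of `σ`. -/
private lemma circle_aux (σ : Circle → Circle) (hcont : Continuous σ)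
    (hfree : ∀ z, σ z ≠ z) (e : ℝ → Circle) (he : Continuous e) (α β : ℝ) (hαβ : α < β)
    (f : ℝ → ℝ) (hf : ContinuousOn f (Ioo α β)) (hmaps : MapsTo f (Ioo α β) (Ioo α β))
    (hnofix : ∀ t ∈ Ioo α β, f t ≠ t)
    (hcomm : ∀ t ∈ Ioo α β, e (f t) = σ (e t)) : False := by
  obtain ⟨t₀, ht₀⟩ : (Ioo α β).Nonempty := nonempty_Ioo.2 hαβ
  have hg : ContinuousOn (fun t => f t - t) (Ioo α β) := hf.sub continuousOn_id
  have hconn : IsPreconnected ((fun t => f t - t) '' Ioo α β) := isPreconnected_Ioo.image _ hg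
  have hzero : ∀ t₁ ∈ Ioo α β, ∀ t₂ ∈ Ioo α β, f t₁ < t₁ → t₂ < f t₂ → False := by
    intro t₁ h₁ t₂ h₂ hlt hgt
    have h0 : (0 : ℝ) ∈ (fun t => f t - t) '' Ioo α β := by
      apply hconn.ordConnected.out ⟨t₁, h₁, rfl⟩ ⟨t₂, h₂, rfl⟩
      simp only [mem_Icc]
      constructor <;> [linarith; linarith]
    obtain ⟨s, hs, hs0⟩ := h0
    have hs0' : f s - s = 0 := hs0
    exact hnofix s hs (by linarith)
  have hsign : (∀ t ∈ Ioo α β, t < f t) ∨ (∀ t ∈ Ioo α β, f t < t) := by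
    rcases (hnofix t₀ ht₀).lt_or_gt with h0 | h0
    · right; intro t ht
      by_contra h
      exact hzero t₀ ht₀ t ht h0 (lt_of_le_of_ne (not_lt.1 h) (Ne.symm (hnofix t ht)))
    · left; intro t ht
      by_contra h
      exact hzero t ht t₀ ht₀ (lt_of_le_of_ne (not_lt.1 h) (hnofix t ht)) h0
  -- the endpoint towards which `f` pushes points
  have key : ∀ γ : ℝ, γ ∈ Icc α β → Tendsto f (𝓝[Ioo α β] γ) (𝓝 γ) → False := by
    intro γ hγ hT
    have hne : (𝓝[Ioo α β] γ).NeBot := by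
      rw [← mem_closure_iff_nhdsWithin_neBot, closure_Ioo hαβ.ne]
      exact hγ
    have h1 : Tendsto (fun t => e (f t)) (𝓝[Ioo α β] γ) (𝓝 (e γ)) := (he.tendsto γ).comp hT
    have h2 : Tendsto (fun t => σ (e t)) (𝓝[Ioo α β] γ) (𝓝 (σ (e γ))) :=
      ((hcont.comp he).tendsto γ).mono_left nhdsWithin_le_nhds
    have h3 : e γ = σ (e γ) :=
      tendsto_nhds_unique (h1.congr' (eventually_nhdsWithin_of_forall hcomm)) h2
    exact hfree (e γ) h3.symm
  rcases hsign with hgt | hlt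
  · refine key β ⟨hαβ.le, le_rfl⟩ ?_
    refine tendsto_of_tendsto_of_tendsto_of_le_of_le'
      (tendsto_id.mono_left nhdsWithin_le_nhds) tendsto_const_nhds
      (eventually_nhdsWithin_of_forall fun t ht => (hgt t ht).le)
      (eventually_nhdsWithin_of_forall fun t ht => (hmaps ht).2.le)
  · refine key α ⟨le_rfl, hαβ.le⟩ ?_
    refine tendsto_of_tendsto_of_tendsto_of_le_of_le'
      tendsto_const_nhds (tendsto_id.mono_left nhdsWithin_le_nhds)
      (eventually_nhdsWithin_of_forall fun t ht => (hmaps ht).1.le)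
      (eventually_nhdsWithin_of_forall fun t ht => (hlt t ht).le)

/-- Given a parametrization `e` of the circle with partial inverse `φ`, if `φ q` and `φ (σ q)`
lie in the same open interval `(α, β)` avoiding `p` and `σ p`, we get a contradiction. -/
private lemma circle_case (σ : Circle → Circle) (hcont : Continuous σ) (hinv : ∀ z, σ (σ z) = z)
    (hfree : ∀ z, σ z ≠ z) (p q : Circle)
    (e : ℝ → Circle) (he : Continuous e)
    (φ : Circle → ℝ) (heφ : ∀ z, e (φ z) = z)
    (hφcont : ∀ z : Circle, z ≠ p → ContinuousAt φ z)
    (α β : ℝ) (hαβ : α < β)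
    (hval : ∀ z : Circle, z ≠ p → z ≠ σ p → φ z ≠ α ∧ φ z ≠ β)
    (het : ∀ t ∈ Ioo α β, e t ≠ p ∧ e t ≠ σ p)
    (hq : φ q ∈ Ioo α β) (hy : φ (σ q) ∈ Ioo α β) : False := by
  set f : ℝ → ℝ := fun t => φ (σ (e t)) with hf_def
  have hσinj : ∀ z w : Circle, σ z = σ w → z = w := by
    intro z w h
    have := congrArg σ h
    rwa [hinv, hinv] at this
  have h1 : ∀ t ∈ Ioo α β, σ (e t) ≠ p ∧ σ (e t) ≠ σ p := by
    intro t ht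
    obtain ⟨h1, h2⟩ := het t ht
    constructor
    · intro h
      exact h2 (hσinj _ _ (by rw [h, hinv]))
    · intro h
      exact h1 (hσinj _ _ h)
  have hf : ContinuousOn f (Ioo α β) := by
    intro t ht
    exact (ContinuousAt.comp (x := t) (hφcont _ (h1 t ht).1)
      (ContinuousAt.comp (x := t) hcont.continuousAt he.continuousAt)).continuousWithinAt
  have hnofix : ∀ t ∈ Ioo α β, f t ≠ t := by
    intro t ht h
    apply hfree (e t)
    calc σ (e t) = e (f t) := (heφ _).symm
    _ = e t := by rw [h]
  have hcomm : ∀ t ∈ Ioo α β, e (f t) = σ (e t) := fun t _ => heφ _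
  have hyim : φ (σ q) ∈ f '' Ioo α β := ⟨φ q, hq, by simp only [hf_def, heφ q]⟩
  have hconn : IsPreconnected (f '' Ioo α β) := isPreconnected_Ioo.image _ hf
  have himval : ∀ w ∈ f '' Ioo α β, w ≠ α ∧ w ≠ β := by
    rintro w ⟨t, ht, rfl⟩
    exact hval _ (h1 t ht).1 (h1 t ht).2
  have hmaps : MapsTo f (Ioo α β) (Ioo α β) := by
    intro t ht
    have hft := himval _ ⟨t, ht, rfl⟩
    by_contra h
    rw [mem_Ioo, not_and_or] at h
    rcases h with h' | h'
    · -- f t ≤ α, so α lies between f t and φ (σ q)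
      have hα : α ∈ f '' Ioo α β := by
        apply hconn.ordConnected.out ⟨t, ht, rfl⟩ hyim
        exact ⟨lt_of_le_of_ne (not_lt.1 h') hft.1 |>.le, hy.1.le⟩
      exact (himval _ hα).1 rfl
    · have hβ : β ∈ f '' Ioo α β := by
        apply hconn.ordConnected.out hyim ⟨t, ht, rfl⟩
        exact ⟨hy.2.le, lt_of_le_of_ne (not_lt.1 h') (Ne.symm hft.2) |>.le⟩
      exact (himval _ hβ).2 rfl
  exact circle_aux σ hcont hfree e he α β hαβ f hf hmaps hnofix hcomm

/-- For a continuous fixed-point-free involution `σ` of the circle and any points `p`, `q`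
with `q ∉ {p, σ p}`, the pair `(p, σ p)` separates the pair `(q, σ q)`: the points `q` and
`σ q` lie in different connected components (arcs) of the circle with `p` and `σ p` removed. -/
theorem involution_circle_separates
    (σ : Circle → Circle) (hcont : Continuous σ) (hinv : ∀ p, σ (σ p) = p)
    (hfree : ∀ p, σ p ≠ p) (p q : Circle) (hq1 : q ≠ p) (hq2 : q ≠ σ p) :
    connectedComponentIn ({p, σ p}ᶜ : Set Circle) q ≠
      connectedComponentIn ({p, σ p}ᶜ : Set Circle) (σ q) := by
  intro hC
  -- the parametrization `e` with `e π = p`, and its partial inverse `φ`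
  set c : Circle := p * (Circle.exp π)⁻¹ with hc_def
  set e : ℝ → Circle := fun t => c * Circle.exp t with he_def
  set φ : Circle → ℝ := fun z => Complex.arg ((z * c⁻¹ : Circle) : ℂ) with hφ_def
  have he : Continuous e := continuous_const.mul Circle.exp.continuous
  have heφ : ∀ z, e (φ z) = z := by
    intro z
    show c * Circle.exp (Complex.arg ((z * c⁻¹ : Circle) : ℂ)) = z
    rw [Circle.exp_arg (z * c⁻¹), mul_comm z, mul_inv_cancel_left]
  have heπ : e π = p := by
    show c * Circle.exp π = p
    rw [hc_def, inv_mul_cancel_right]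
  have hrange : ∀ z, φ z ∈ Ioc (-π) π := fun z => ⟨Complex.neg_pi_lt_arg _, Complex.arg_le_pi _⟩
  have hφp : ∀ z : Circle, φ z = π → z = p := by
    intro z h
    rw [← heφ z, h, heπ]
  have hφpπ : φ p = π := by
    show Complex.arg ((p * c⁻¹ : Circle) : ℂ) = π
    have hpc : p * c⁻¹ = Circle.exp π := by
      rw [hc_def, mul_inv_rev, inv_inv, mul_comm (Circle.exp π), mul_inv_cancel_left]
    rw [hpc]
    exact Circle.arg_exp (by linarith [Real.pi_pos]) le_rfl
  have hφe : ∀ t ∈ Ioo (-π) π, φ (e t) = t := by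
    intro t ht
    show Complex.arg ((c * Circle.exp t * c⁻¹ : Circle) : ℂ) = t
    have : c * Circle.exp t * c⁻¹ = Circle.exp t := by rw [mul_comm c, mul_inv_cancel_right]
    rw [this]
    exact Circle.arg_exp ht.1 ht.2.le
  have hφinj : ∀ z w : Circle, φ z = φ w → z = w := by
    intro z w h
    rw [← heφ z, h, heφ w]
  have hφcont : ∀ z : Circle, z ≠ p → ContinuousAt φ z := by
    intro z hz
    have hslit : ((z * c⁻¹ : Circle) : ℂ) ∈ Complex.slitPlane := by
      rw [Complex.mem_slitPlane_iff]
      by_contra h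
      push_neg at h
      obtain ⟨hre, him⟩ := h
      rcases lt_or_eq_of_le hre with hre' | hre'
      · -- arg = π, so z = p
        apply hz
        apply hφp
        exact Complex.arg_eq_pi_iff.2 ⟨hre', him⟩
      · have : ((z * c⁻¹ : Circle) : ℂ) = 0 := Complex.ext (by rw [Complex.zero_re]; exact hre') (by rw [Complex.zero_im]; exact him)
        exact (z * c⁻¹).coe_ne_zero this
    have h2 : ContinuousAt (fun w : Circle => ((w * c⁻¹ : Circle) : ℂ)) z :=
      (continuous_subtype_val.comp (continuous_mul_right c⁻¹)).continuousAt
    exact ContinuousAt.comp (x := z) (Complex.continuousAt_arg hslit) h2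
  -- basic membership facts
  have hσq1 : σ q ≠ p := fun h => hq2 ((hinv q).symm.trans (congrArg σ h))
  have hσq2 : σ q ≠ σ p := fun h => hq1 (by rw [← hinv q, h, hinv])
  have hσpp : σ p ≠ p := hfree p
  set S : Set Circle := {p, σ p}ᶜ with hS_def
  have hqS : q ∈ S := by simp [hS_def, hq1, hq2]
  have hσqS : σ q ∈ S := by simp [hS_def, hσq1, hσq2]
  set C : Set Circle := connectedComponentIn S q with hC_def
  have hqC : q ∈ C := mem_connectedComponentIn hqS
  have hσqC : σ q ∈ C := by rw [hC]; exact mem_connectedComponentIn hσqS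
  have hCS : C ⊆ S := connectedComponentIn_subset S q
  have hCconn : IsPreconnected C := isPreconnected_connectedComponentIn
  -- pushing to ℝ via φ
  have hCp : ∀ z ∈ C, z ≠ p := fun z hz h => (hCS hz) (by simp [h])
  have hφC : ContinuousOn φ C := fun z hz =>
    (hφcont z (hCp z hz)).continuousWithinAt
  have hconnC : IsPreconnected (φ '' C) := hCconn.image φ hφC
  set a : ℝ := φ (σ p) with ha_def
  have ha : a ∈ Ioo (-π) π := by
    refine ⟨(hrange (σ p)).1, lt_of_le_of_ne (hrange (σ p)).2 ?_⟩
    intro h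
    exact hσpp (hφp _ h)
  have hanotin : a ∉ φ '' C := by
    rintro ⟨z, hz, hza⟩
    have hzσ : z = σ p := hφinj _ _ hza
    exact (hCS hz) (by simp [hzσ])
  set x : ℝ := φ q with hx_def
  set y : ℝ := φ (σ q) with hy_def
  have hxC : x ∈ φ '' C := ⟨q, hqC, rfl⟩
  have hyC : y ∈ φ '' C := ⟨σ q, hσqC, rfl⟩
  have hxa : x ≠ a := fun h => hq2 (hφinj _ _ h)
  have hya : y ≠ a := fun h => hσq2 (hφinj _ _ h)
  have hxI : x ∈ Ioo (-π) π :=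
    ⟨(hrange q).1, lt_of_le_of_ne (hrange q).2 fun h => hq1 (hφp _ h)⟩
  have hyI : y ∈ Ioo (-π) π :=
    ⟨(hrange (σ q)).1, lt_of_le_of_ne (hrange (σ q)).2 fun h => hσq1 (hφp _ h)⟩
  -- x and y lie on the same side of a
  have hside : (a < x ∧ a < y) ∨ (x < a ∧ y < a) := by
    rcases hxa.lt_or_gt with h1 | h1 <;> rcases hya.lt_or_gt with h2 | h2
    · exact Or.inr ⟨h1, h2⟩
    · exact absurd (hconnC.ordConnected.out hxC hyC ⟨h1.le, h2.le⟩) hanotin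
    · exact absurd (hconnC.ordConnected.out hyC hxC ⟨h2.le, h1.le⟩) hanotin
    · exact Or.inl ⟨h1, h2⟩
  rcases hside with ⟨h1, h2⟩ | ⟨h1, h2⟩
  · -- both in (a, π)
    refine circle_case σ hcont hinv hfree p q e he φ heφ hφcont a π ha.2 ?_ ?_ ⟨h1, hxI.2⟩ ⟨h2, hyI.2⟩
    · intro z hzp hzσp
      exact ⟨fun h => hzσp (hφinj _ _ h), fun h => hzp (hφp _ h)⟩
    · intro t ht
      have htI : t ∈ Ioo (-π) π := ⟨lt_trans ha.1 ht.1, ht.2⟩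
      constructor
      · intro h
        have h' := hφe t htI
        rw [h, hφpπ] at h'
        exact absurd h' (ne_of_gt ht.2)
      · intro h
        have h' := hφe t htI
        rw [h] at h'
        exact (ne_of_lt ht.1) h'
  · -- both in (-π, a)
    refine circle_case σ hcont hinv hfree p q e he φ heφ hφcont (-π) a ha.1 ?_ ?_ ⟨hxI.1, h1⟩ ⟨hyI.1, h2⟩
    · intro z hzp hzσp
      exact ⟨fun h => absurd ((hrange z).1) (by rw [h]; exact lt_irrefl _),
        fun h => hzσp (hφinj _ _ h)⟩
    · intro t ht
      have htI : t ∈ Ioo (-π) π := ⟨ht.1, lt_trans ht.2 ha.2⟩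
      constructor
      · intro h
        have h' := hφe t htI
        rw [h, hφpπ] at h'
        exact absurd h' (ne_of_gt htI.2)
      · intro h
        have h' := hφe t htI
        rw [h] at h'
        exact (ne_of_gt ht.2) h'
end

section
/- Let μ : A → −A be a continuous bijection, where A is the closed arc of the unit circle from (1,0) to (0,1) in the first quadrant and −A its antipodal arc, with μ(1,0) = (−1,0). Then μ extends uniquely to a continuous fixed-point-free involution σ of S¹ commuting with the reflection in the z-axis. -/
open Complex

/-- The closed first-quadrant arc of the unit circle, from `(1,0)` to `(0,1)`. -/
def arcA : Set Circle := {p : Circle | 0 ≤ (p : ℂ).re ∧ 0 ≤ (p : ℂ).im}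

/-- The antipodal arc `-A`, from `(-1,0)` to `(0,-1)`. -/
def arcNegA : Set Circle := {p : Circle | (p : ℂ).re ≤ 0 ∧ (p : ℂ).im ≤ 0}

/-- The reflection of the circle in the `z`-axis (the imaginary axis),
`(x, z) ↦ (-x, z)`. -/
noncomputable def rho (p : Circle) : Circle :=
  ⟨-(starRingEnd ℂ) p, by
    have := p.2
    simp only [Submonoid.unitSphere, Submonoid.mem_mk] at *
    simpa using this⟩

/-- The point `(1,0)` of the circle. -/
noncomputable def ptOne : Circle := ⟨1, by simp [Submonoid.unitSphere]⟩

/-- The point `(-1,0)` of the circle. -/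
noncomputable def ptNegOne : Circle := ⟨-1, by simp [Submonoid.unitSphere]⟩

/-! A homeomorphism between two arcs sends endpoints to endpoints: parametrising `A` by angle,
the real part of `μ` is continuous and injective, hence strictly monotone, so `μ (1,0) = (-1,0)`
forces `μ (0,1) = (0,-1)`. Consequently `μ` and its conjugate `rho ∘ μ ∘ rho` agree on
`A ∩ rho A = {(0,1)}` and glue to a continuous `rho`-equivariant bijection
`E = upperExtension μ` from the upper half circle onto the lower one, which swaps `(1,0)` and
`(-1,0)`. The involution is `E` on the upper half and `E⁻¹` on the lower half; `E⁻¹` is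
continuous because the upper half is compact. Conversely, equivariance determines any such
involution on the second quadrant, and `σ ∘ σ = id` then determines it on the lower half. -/

open Set Function

theorem Set.InvOn.inv_comm_of_comm {X : Type*} {s t : Set X} {f g φ : X → X}
    (hfg : InvOn g f s t) (hg : MapsTo g t s) (hφs : MapsTo φ s s)
    (hfφ : ∀ x ∈ s, f (φ x) = φ (f x)) {x : X} (hx : x ∈ t) : g (φ x) = φ (g x) := by
  conv_lhs => rw [← hfg.2 hx, ← hfφ _ (hg hx)]
  exact hfg.1 (hφs (hg hx))

section Piecewise

variable {X : Type*} {s t : Set X} {f g φ : X → X} [DecidablePred (· ∈ s)]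

theorem Set.piecewise_involutive_of_invOn (hfg : InvOn g f s t) (hf : MapsTo f s t)
    (hg : MapsTo g t s) (hst : sᶜ ⊆ t) (heq : EqOn f g (s ∩ t)) :
    Involutive (s.piecewise f g) := by
  intro x
  by_cases hx : x ∈ s
  · rw [piecewise_eq_of_mem _ _ _ hx]
    by_cases hfx : f x ∈ s
    · rw [piecewise_eq_of_mem _ _ _ hfx, heq ⟨hfx, hf hx⟩, hfg.1 hx]
    · rw [piecewise_eq_of_notMem _ _ _ hfx, hfg.1 hx]
  · rw [piecewise_eq_of_notMem _ _ _ hx, piecewise_eq_of_mem _ _ _ (hg (hst hx)), hfg.2 (hst hx)]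

theorem Set.piecewise_ne_self (hf : ∀ x ∈ s, f x ≠ x) (hg : MapsTo g t s)
    (hst : sᶜ ⊆ t) (x : X) : s.piecewise f g x ≠ x := by
  by_cases hx : x ∈ s
  · rw [piecewise_eq_of_mem _ _ _ hx]
    exact hf x hx
  · rw [piecewise_eq_of_notMem _ _ _ hx]
    exact fun h => hx (h ▸ hg (hst hx))

theorem Set.piecewise_comp_eq_of_invOn (hfg : InvOn g f s t) (hg : MapsTo g t s)
    (hst : sᶜ ⊆ t) (hφs : φ ⁻¹' s = s)
    (hfφ : ∀ x ∈ s, f (φ x) = φ (f x)) (x : X) :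
    s.piecewise f g (φ x) = φ (s.piecewise f g x) := by
  by_cases hx : x ∈ s
  · have hφx : φ x ∈ s := (hφs.symm ▸ hx : x ∈ φ ⁻¹' s)
    rw [piecewise_eq_of_mem _ _ _ hx, piecewise_eq_of_mem _ _ _ hφx, hfφ x hx]
  · have hφx : φ x ∉ s := fun h => hx (hφs ▸ h : x ∈ s)
    rw [piecewise_eq_of_notMem _ _ _ hx, piecewise_eq_of_notMem _ _ _ hφx]
    exact hfg.inv_comm_of_comm hg (fun y hy => (hφs.symm ▸ hy : y ∈ φ ⁻¹' s)) hfφ (hst hx)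

theorem Set.eq_piecewise_of_involutive {τ : X → X} (hτ : Involutive τ) (hτf : EqOn τ f s)
    (hfg : RightInvOn g f t) (hg : MapsTo g t s) (hst : sᶜ ⊆ t) :
    τ = s.piecewise f g := by
  funext x
  by_cases hx : x ∈ s
  · rw [piecewise_eq_of_mem _ _ _ hx, hτf hx]
  · calc τ x = τ (τ (g x)) := by rw [hτf (hg (hst hx)), hfg (hst hx)]
      _ = s.piecewise f g x := by rw [hτ, piecewise_eq_of_notMem _ _ _ hx]

theorem Set.piecewise_conj_eqOn_preimage (hφ : Involutive φ)
    (hc : ∀ x ∈ s, φ x ∈ s → f (φ x) = φ (f x)) :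
    EqOn (s.piecewise f (φ ∘ f ∘ φ)) (φ ∘ f ∘ φ) (φ ⁻¹' s) := by
  intro x hx
  by_cases hxs : x ∈ s
  · rw [piecewise_eq_of_mem _ _ _ hxs, comp_apply, comp_apply, hc x hxs hx, hφ]
  · exact piecewise_eq_of_notMem _ _ _ hxs

theorem Set.piecewise_conj_comp_eq (hφ : Involutive φ)
    (hc : ∀ x ∈ s, φ x ∈ s → f (φ x) = φ (f x)) {x : X} (hx : x ∈ s ∪ φ ⁻¹' s) :
    s.piecewise f (φ ∘ f ∘ φ) (φ x) = φ (s.piecewise f (φ ∘ f ∘ φ) x) := by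
  rcases hx with hx | hx
  · rw [piecewise_conj_eqOn_preimage hφ hc (by rwa [mem_preimage, hφ] : φ x ∈ φ ⁻¹' s),
      piecewise_eq_of_mem _ _ _ hx, comp_apply, comp_apply, hφ]
  · rw [piecewise_conj_eqOn_preimage hφ hc hx, piecewise_eq_of_mem _ _ _ (show φ x ∈ s from hx),
      comp_apply, comp_apply, hφ]

theorem Set.continuousOn_piecewise_conj [TopologicalSpace X] (hφ : Involutive φ)
    (hφc : Continuous φ) (hs : IsClosed s) (hf : ContinuousOn f s)
    (hc : ∀ x ∈ s, φ x ∈ s → f (φ x) = φ (f x)) :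
    ContinuousOn (s.piecewise f (φ ∘ f ∘ φ)) (s ∪ φ ⁻¹' s) := by
  have hconj : ContinuousOn (φ ∘ f ∘ φ) (φ ⁻¹' s) :=
    hφc.comp_continuousOn (hf.comp hφc.continuousOn (mapsTo_preimage φ s))
  exact (hf.congr fun x hx => piecewise_eq_of_mem _ _ _ hx).union_of_isClosed
    (hconj.congr (piecewise_conj_eqOn_preimage hφ hc)) hs (hs.preimage hφc)

theorem Set.eqOn_piecewise_conj {τ : X → X} (hφ : Involutive φ)
    (hc : ∀ x ∈ s, φ x ∈ s → f (φ x) = φ (f x)) (hτf : EqOn τ f s)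
    (hτφ : ∀ x, τ (φ x) = φ (τ x)) : EqOn τ (s.piecewise f (φ ∘ f ∘ φ)) (s ∪ φ ⁻¹' s) := by
  rintro x (hx | hx)
  · rw [piecewise_eq_of_mem _ _ _ hx, hτf hx]
  · rw [piecewise_conj_eqOn_preimage hφ hc hx, comp_apply, comp_apply, ← hτf hx, ← hτφ, hφ]

end Piecewise

theorem continuous_piecewise_of_isClosed {X Y : Type*} [TopologicalSpace X] [TopologicalSpace Y]
    {s t : Set X} {f g : X → Y} [DecidablePred (· ∈ s)] (hs : IsClosed s) (ht : IsClosed t)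
    (hst : sᶜ ⊆ t) (heq : EqOn f g (s ∩ t)) (hf : ContinuousOn f s)
    (hg : ContinuousOn g t) : Continuous (s.piecewise f g) := by
  rw [← continuousOn_univ]
  refine ((hf.congr fun x hx => piecewise_eq_of_mem _ _ _ hx).union_of_isClosed
    (hg.congr fun x hx => ?_) hs ht).mono fun x _ => (em (x ∈ s)).imp_right (hst ·)
  by_cases hxs : x ∈ s
  · rw [piecewise_eq_of_mem _ _ _ hxs, heq ⟨hxs, hx⟩]
  · exact piecewise_eq_of_notMem _ _ _ hxs

theorem Set.BijOn.continuousOn_invFunOn {X Y : Type*} [TopologicalSpace X] [TopologicalSpace Y]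
    [T2Space Y] [Nonempty X] {s : Set X} {t : Set Y} {f : X → Y} (h : BijOn f s t)
    (hs : IsCompact s) (hf : ContinuousOn f s) : ContinuousOn (invFunOn f s) t := by
  refine continuousOn_iff_isClosed.2 fun C hC => ⟨f '' (s ∩ C),
    ((hs.inter_right hC).image_of_continuousOn (hf.mono inter_subset_left)).isClosed, ?_⟩
  ext y
  constructor
  · rintro ⟨hyC, hyt⟩
    exact ⟨⟨_, ⟨h.surjOn.mapsTo_invFunOn hyt, hyC⟩, h.invOn_invFunOn.2 hyt⟩, hyt⟩
  · rintro ⟨⟨x, ⟨hxs, hxC⟩, rfl⟩, hyt⟩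
    exact ⟨by rwa [mem_preimage, h.invOn_invFunOn.1 hxs], hyt⟩

noncomputable def ptI : Circle := ⟨I, by simp [Submonoid.unitSphere]⟩

noncomputable def ptNegI : Circle := ⟨-I, by simp [Submonoid.unitSphere]⟩

def upperHalf : Set Circle := {p : Circle | 0 ≤ (p : ℂ).im}

def lowerHalf : Set Circle := {p : Circle | (p : ℂ).im ≤ 0}

theorem Circle.re_sq_add_im_sq (p : Circle) : (p : ℂ).re ^ 2 + (p : ℂ).im ^ 2 = 1 := by
  simpa [normSq_apply, sq] using p.normSq_coe

@[simp] theorem rho_re (p : Circle) : (rho p : ℂ).re = -(p : ℂ).re := by simp [rho]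

@[simp] theorem rho_im (p : Circle) : (rho p : ℂ).im = (p : ℂ).im := by simp [rho]

theorem rho_involutive : Involutive rho := fun p => Circle.ext (by simp [rho])

theorem continuous_rho : Continuous rho :=
  (continuous_conj.comp continuous_subtype_val).neg.subtype_mk _

theorem rho_ptOne : rho ptOne = ptNegOne := Circle.ext (by simp [rho, ptOne, ptNegOne])

theorem rho_ptNegOne : rho ptNegOne = ptOne := rho_ptOne ▸ rho_involutive ptOne

theorem rho_ptI : rho ptI = ptI := Circle.ext (by simp [rho, ptI])

theorem rho_ptNegI : rho ptNegI = ptNegI := Circle.ext (by simp [rho, ptNegI])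

theorem ptOne_ne_ptNegOne : ptOne ≠ ptNegOne := fun h => by
  have := congrArg (fun p : Circle => (p : ℂ).re) h
  norm_num [ptOne, ptNegOne] at this

theorem ptOne_mem_arcA : ptOne ∈ arcA := ⟨by simp [ptOne], by simp [ptOne]⟩

theorem ptI_mem_arcA : ptI ∈ arcA := ⟨by simp [ptI], by simp [ptI]⟩

theorem ptNegI_mem_arcNegA : ptNegI ∈ arcNegA := ⟨by simp [ptNegI], by simp [ptNegI]⟩

theorem eq_ptI_of_re_eq_zero {p : Circle} (h0 : (p : ℂ).re = 0) (h1 : 0 ≤ (p : ℂ).im) :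
    p = ptI := by
  have him : (p : ℂ).im = 1 :=
    (pow_eq_one_iff_of_nonneg h1 two_ne_zero).1 (by simpa [h0] using p.re_sq_add_im_sq)
  exact Circle.ext (Complex.ext (by simp [ptI, h0]) (by simp [ptI, him]))

theorem eq_ptNegI_of_re_eq_zero {p : Circle} (h0 : (p : ℂ).re = 0) (h1 : (p : ℂ).im ≤ 0) :
    p = ptNegI := by
  have him : -(p : ℂ).im = 1 :=
    (pow_eq_one_iff_of_nonneg (neg_nonneg.2 h1) two_ne_zero).1
      (by simpa [h0] using p.re_sq_add_im_sq)
  exact Circle.ext (Complex.ext (by simp [ptNegI, h0]) (by simp [ptNegI]; linarith))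

theorem eq_ptOne_or_ptNegOne_of_mem_upperHalf_inter_lowerHalf {p : Circle}
    (hp : p ∈ upperHalf ∩ lowerHalf) : p = ptOne ∨ p = ptNegOne := by
  have h0 : (p : ℂ).im = 0 := le_antisymm hp.2 hp.1
  have h : ((p : ℂ).re - 1) * ((p : ℂ).re + 1) = 0 := by
    linear_combination (p.re_sq_add_im_sq) - (p : ℂ).im * h0
  rcases mul_eq_zero.1 h with h | h
  · exact .inl (Circle.ext (Complex.ext (by simp [ptOne]; linarith) (by simp [ptOne, h0])))
  · exact .inr (Circle.ext (Complex.ext (by simp [ptNegOne]; linarith) (by simp [ptNegOne, h0])))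

theorem isClosed_arcA : IsClosed arcA :=
  (isClosed_le continuous_const (continuous_re.comp continuous_subtype_val)).inter
    (isClosed_le continuous_const (continuous_im.comp continuous_subtype_val))

theorem isClosed_upperHalf : IsClosed upperHalf :=
  isClosed_le continuous_const (continuous_im.comp continuous_subtype_val)

theorem isClosed_lowerHalf : IsClosed lowerHalf :=
  isClosed_le (continuous_im.comp continuous_subtype_val) continuous_const

theorem compl_upperHalf_subset_lowerHalf : upperHalfᶜ ⊆ lowerHalf :=
  fun p hp => (not_le.1 (show ¬0 ≤ (p : ℂ).im from hp)).le

theorem arcA_union_preimage_rho : arcA ∪ rho ⁻¹' arcA = upperHalf := by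
  ext p
  simp only [arcA, upperHalf, mem_union, mem_preimage, mem_ofPred_eq, rho_re, rho_im,
    neg_nonneg]
  constructor
  · rintro (h | h) <;> exact h.2
  · exact fun h => (le_total 0 (p : ℂ).re).imp (⟨·, h⟩) (⟨·, h⟩)

theorem arcNegA_union_preimage_rho : arcNegA ∪ rho ⁻¹' arcNegA = lowerHalf := by
  ext p
  simp only [arcNegA, lowerHalf, mem_union, mem_preimage, mem_ofPred_eq, rho_re, rho_im,
    neg_nonpos]
  constructor
  · rintro (h | h) <;> exact h.2
  · exact fun h => (le_total (p : ℂ).re 0).imp (⟨·, h⟩) (⟨·, h⟩)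

theorem preimage_rho_upperHalf : rho ⁻¹' upperHalf = upperHalf := by
  ext p; simp [upperHalf]

theorem re_injOn_arcNegA : InjOn (fun p : Circle => (p : ℂ).re) arcNegA := by
  intro p hp q hq h
  have hp2 := p.re_sq_add_im_sq
  have hq2 := q.re_sq_add_im_sq
  simp only at h
  have hsq : (-(p : ℂ).im) ^ 2 = (-(q : ℂ).im) ^ 2 := by
    linear_combination hp2 - hq2 - ((p : ℂ).re + (q : ℂ).re) * h
  exact Circle.ext (Complex.ext h
    (neg_inj.1 ((sq_eq_sq₀ (neg_nonneg.2 hp.2) (neg_nonneg.2 hq.2)).1 hsq)))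

open Real

theorem ContinuousOn.eq_right_of_injOn_Icc {α δ : Type*} [ConditionallyCompleteLinearOrder α]
    [TopologicalSpace α] [OrderTopology α] [DenselyOrdered α] [LinearOrder δ]
    [TopologicalSpace δ] [OrderClosedTopology δ] {f : α → δ} {a b t : α}
    (hf : ContinuousOn f (Icc a b)) (hinj : InjOn f (Icc a b)) (hab : f a ≤ f b)
    (ht : t ∈ Icc a b) (hbt : f b ≤ f t) : t = b := by
  have hmono := hf.strictMonoOn_of_injOn_Icc (ht.1.trans ht.2) hab hinj
  by_contra hne
  exact (hmono ht ⟨ht.1.trans ht.2, le_rfl⟩ (ht.2.lt_of_ne hne)).not_ge hbt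

theorem Circle.exp_pi_div_two : Circle.exp (π / 2) = ptI :=
  Circle.ext (by simp [Circle.coe_exp, ptI, exp_mul_I])

theorem exp_mem_arcA {t : ℝ} (ht : t ∈ Icc 0 (π / 2)) : Circle.exp t ∈ arcA :=
  ⟨by simpa [Circle.coe_exp] using cos_nonneg_of_mem_Icc ⟨by linarith [ht.1, pi_pos], ht.2⟩,
    by simpa [Circle.coe_exp] using sin_nonneg_of_nonneg_of_le_pi ht.1 (by linarith [ht.2, pi_pos])⟩

theorem exists_exp_eq_of_mem_arcA {p : Circle} (hp : p ∈ arcA) :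
    ∃ t ∈ Icc 0 (π / 2), Circle.exp t = p :=
  ⟨arg p, ⟨arg_nonneg_iff.2 hp.2, arg_le_pi_div_two_iff.2 (.inl hp.1)⟩, Circle.exp_arg p⟩

theorem Circle.neg_one_le_re (p : Circle) : -1 ≤ (p : ℂ).re :=
  neg_le_of_abs_le (p.norm_coe ▸ abs_re_le_norm (p : ℂ))

theorem apply_ptI_eq_ptNegI {μ : Circle → Circle} (hcont : ContinuousOn μ arcA)
    (hbij : BijOn μ arcA arcNegA) (hone : μ ptOne = ptNegOne) : μ ptI = ptNegI := by
  set f : ℝ → ℝ := fun t => (μ (Circle.exp t) : ℂ).re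
  have hexp : MapsTo Circle.exp (Icc 0 (π / 2)) arcA := fun t ht => exp_mem_arcA ht
  have hf : ContinuousOn f (Icc 0 (π / 2)) :=
    continuous_re.comp_continuousOn (continuous_subtype_val.comp_continuousOn
      (hcont.comp Circle.exp.continuous.continuousOn hexp))
  have hinj : InjOn f (Icc 0 (π / 2)) :=
    (re_injOn_arcNegA.comp hbij.injOn hbij.mapsTo).comp
      (Circle.exp_injOn_Icc (by linarith [pi_pos])) hexp
  have hle : f 0 ≤ f (π / 2) := by
    have : Circle.exp 0 = ptOne := Circle.ext (by simp [ptOne])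
    simpa [f, this, hone, ptNegOne] using Circle.neg_one_le_re (μ (Circle.exp (π / 2)))
  obtain ⟨p, hp, hμp⟩ := hbij.surjOn ptNegI_mem_arcNegA
  obtain ⟨t, ht, rfl⟩ := exists_exp_eq_of_mem_arcA hp
  have hpi : f (π / 2) ≤ f t := by
    simpa [f, hμp, ptNegI] using (hbij.mapsTo (hexp ⟨pi_div_two_pos.le, le_rfl⟩)).1
  rw [← Circle.exp_pi_div_two, ← hf.eq_right_of_injOn_Icc hinj hle ht hpi, hμp]

theorem eq_ptNegI_of_mem_arcNegA_of_rho_mem {p : Circle} (hp : p ∈ arcNegA)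
    (hρp : rho p ∈ arcNegA) : p = ptNegI :=
  eq_ptNegI_of_re_eq_zero (le_antisymm hp.1 (by simpa using hρp.1)) hp.2

section Extension

variable {μ : Circle → Circle}

open Classical

theorem apply_rho_eq_of_mem_arcA (hI : μ ptI = ptNegI) {p : Circle} (hp : p ∈ arcA)
    (hρp : rho p ∈ arcA) : μ (rho p) = rho (μ p) := by
  rw [eq_ptI_of_re_eq_zero (le_antisymm (by simpa using hρp.1) hp.1) hp.2, rho_ptI, hI,
    rho_ptNegI]

noncomputable def upperExtension (μ : Circle → Circle) : Circle → Circle :=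
  arcA.piecewise μ (rho ∘ μ ∘ rho)

theorem upperExtension_eqOn_arcA : EqOn (upperExtension μ) μ arcA :=
  fun _ hp => piecewise_eq_of_mem _ _ _ hp

theorem upperExtension_eqOn_preimage_rho (hI : μ ptI = ptNegI) :
    EqOn (upperExtension μ) (rho ∘ μ ∘ rho) (rho ⁻¹' arcA) :=
  piecewise_conj_eqOn_preimage rho_involutive fun _ hp hρp => apply_rho_eq_of_mem_arcA hI hp hρp

theorem upperExtension_rho (hI : μ ptI = ptNegI) {p : Circle} (hp : p ∈ upperHalf) :
    upperExtension μ (rho p) = rho (upperExtension μ p) :=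
  piecewise_conj_comp_eq rho_involutive (fun _ hq hρq => apply_rho_eq_of_mem_arcA hI hq hρq)
    (arcA_union_preimage_rho ▸ hp)

theorem continuousOn_upperExtension (hcont : ContinuousOn μ arcA) (hI : μ ptI = ptNegI) :
    ContinuousOn (upperExtension μ) upperHalf :=
  arcA_union_preimage_rho ▸ continuousOn_piecewise_conj rho_involutive continuous_rho
    isClosed_arcA hcont fun _ hp hρp => apply_rho_eq_of_mem_arcA hI hp hρp

theorem upperExtension_ptOne (hone : μ ptOne = ptNegOne) : upperExtension μ ptOne = ptNegOne :=
  (upperExtension_eqOn_arcA ptOne_mem_arcA).trans hone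

theorem upperExtension_ptNegOne (hone : μ ptOne = ptNegOne) (hI : μ ptI = ptNegI) :
    upperExtension μ ptNegOne = ptOne := by
  rw [← rho_ptOne, upperExtension_rho hI (ptOne_mem_arcA.2), upperExtension_ptOne hone,
    rho_ptNegOne]

theorem mapsTo_upperExtension (hbij : BijOn μ arcA arcNegA) (hI : μ ptI = ptNegI) :
    MapsTo (upperExtension μ) upperHalf lowerHalf := by
  rw [← arcA_union_preimage_rho, ← arcNegA_union_preimage_rho]
  rintro p (hp | hp)
  · exact .inl (upperExtension_eqOn_arcA hp ▸ hbij.mapsTo hp)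
  · refine .inr ?_
    rw [mem_preimage, upperExtension_eqOn_preimage_rho hI hp, comp_apply, comp_apply,
      rho_involutive]
    exact hbij.mapsTo hp

theorem injOn_upperExtension (hbij : BijOn μ arcA arcNegA) (hI : μ ptI = ptNegI) :
    InjOn (upperExtension μ) upperHalf := by
  have hEA := upperExtension_eqOn_arcA (μ := μ)
  have hEB := upperExtension_eqOn_preimage_rho hI
  -- a point of `A` and a point of `rho ⁻¹' A` with the same image both equal `(0,1)`
  have mixed : ∀ p ∈ arcA, ∀ q ∈ rho ⁻¹' arcA, upperExtension μ p = upperExtension μ q → p = q := by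
    intro p hp q hq h
    rw [hEA hp, hEB hq, comp_apply, comp_apply] at h
    have hμp : μ p = ptNegI := eq_ptNegI_of_mem_arcNegA_of_rho_mem (hbij.mapsTo hp)
      (by rw [h, rho_involutive]; exact hbij.mapsTo hq)
    have hp' : p = ptI := hbij.injOn hp ptI_mem_arcA (hμp.trans hI.symm)
    have hq' : rho q = ptI := hbij.injOn hq ptI_mem_arcA (by
      rw [hI, ← rho_ptNegI, ← hμp, h, rho_involutive])
    rw [hp', ← rho_ptI, ← hq', rho_involutive]
  rw [← arcA_union_preimage_rho]
  rintro p (hp | hp) q (hq | hq) h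
  · exact hbij.injOn hp hq (by rwa [hEA hp, hEA hq] at h)
  · exact mixed p hp q hq h
  · exact (mixed q hq p hp h.symm).symm
  · rw [hEB hp, hEB hq] at h
    exact rho_involutive.injective (hbij.injOn hp hq (rho_involutive.injective h))

theorem surjOn_upperExtension (hbij : BijOn μ arcA arcNegA) (hI : μ ptI = ptNegI) :
    SurjOn (upperExtension μ) upperHalf lowerHalf := by
  rw [← arcNegA_union_preimage_rho]
  rintro q (hq | hq)
  · obtain ⟨p, hp, rfl⟩ := hbij.surjOn hq
    exact ⟨p, arcA_union_preimage_rho ▸ .inl hp, upperExtension_eqOn_arcA hp⟩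
  · obtain ⟨p, hp, hpq⟩ := hbij.surjOn hq
    have hpU : p ∈ upperHalf := arcA_union_preimage_rho ▸ .inl hp
    refine ⟨rho p, by rwa [← mem_preimage, preimage_rho_upperHalf], ?_⟩
    rw [upperExtension_rho hI hpU, upperExtension_eqOn_arcA hp, hpq, rho_involutive]

theorem bijOn_upperExtension (hbij : BijOn μ arcA arcNegA) (hI : μ ptI = ptNegI) :
    BijOn (upperExtension μ) upperHalf lowerHalf :=
  ⟨mapsTo_upperExtension hbij hI, injOn_upperExtension hbij hI, surjOn_upperExtension hbij hI⟩

noncomputable def arcInvolution (μ : Circle → Circle) : Circle → Circle :=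
  upperHalf.piecewise (upperExtension μ) (invFunOn (upperExtension μ) upperHalf)

theorem upperExtension_eqOn_invFunOn (hbij : BijOn μ arcA arcNegA) (hone : μ ptOne = ptNegOne)
    (hI : μ ptI = ptNegI) :
    EqOn (upperExtension μ) (invFunOn (upperExtension μ) upperHalf) (upperHalf ∩ lowerHalf) := by
  have hinv := (bijOn_upperExtension hbij hI).invOn_invFunOn
  have hOne : ptOne ∈ upperHalf := ptOne_mem_arcA.2
  have hNegOne : ptNegOne ∈ upperHalf := show 0 ≤ (ptNegOne : ℂ).im by simp [ptNegOne]
  intro p hp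
  rcases eq_ptOne_or_ptNegOne_of_mem_upperHalf_inter_lowerHalf hp with rfl | rfl
  · rw [upperExtension_ptOne hone, ← hinv.1 hNegOne, upperExtension_ptNegOne hone hI]
  · rw [upperExtension_ptNegOne hone hI, ← hinv.1 hOne, upperExtension_ptOne hone]

theorem upperExtension_ne_self (hbij : BijOn μ arcA arcNegA) (hone : μ ptOne = ptNegOne)
    (hI : μ ptI = ptNegI) {p : Circle} (hp : p ∈ upperHalf) : upperExtension μ p ≠ p := by
  intro hfix
  have hpL : p ∈ lowerHalf := hfix ▸ mapsTo_upperExtension hbij hI hp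
  rcases eq_ptOne_or_ptNegOne_of_mem_upperHalf_inter_lowerHalf ⟨hp, hpL⟩ with rfl | rfl
  · exact ptOne_ne_ptNegOne ((upperExtension_ptOne hone).symm.trans hfix).symm
  · exact ptOne_ne_ptNegOne ((upperExtension_ptNegOne hone hI).symm.trans hfix)

theorem continuous_arcInvolution (hcont : ContinuousOn μ arcA) (hbij : BijOn μ arcA arcNegA)
    (hone : μ ptOne = ptNegOne) (hI : μ ptI = ptNegI) : Continuous (arcInvolution μ) :=
  have hE := continuousOn_upperExtension hcont hI
  continuous_piecewise_of_isClosed isClosed_upperHalf isClosed_lowerHalf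
    compl_upperHalf_subset_lowerHalf (upperExtension_eqOn_invFunOn hbij hone hI) hE
    ((bijOn_upperExtension hbij hI).continuousOn_invFunOn isClosed_upperHalf.isCompact hE)

theorem arcInvolution_eqOn_arcA : EqOn (arcInvolution μ) μ arcA := fun _ hp =>
  (piecewise_eq_of_mem _ _ _ (arcA_union_preimage_rho ▸ .inl hp)).trans
    (upperExtension_eqOn_arcA hp)

theorem involutive_arcInvolution (hbij : BijOn μ arcA arcNegA) (hone : μ ptOne = ptNegOne)
    (hI : μ ptI = ptNegI) : Involutive (arcInvolution μ) :=
  have hE := bijOn_upperExtension hbij hI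
  piecewise_involutive_of_invOn hE.invOn_invFunOn hE.mapsTo hE.surjOn.mapsTo_invFunOn
    compl_upperHalf_subset_lowerHalf (upperExtension_eqOn_invFunOn hbij hone hI)

theorem arcInvolution_ne_self (hbij : BijOn μ arcA arcNegA) (hone : μ ptOne = ptNegOne)
    (hI : μ ptI = ptNegI) (p : Circle) : arcInvolution μ p ≠ p :=
  piecewise_ne_self (fun _ => upperExtension_ne_self hbij hone hI)
    (bijOn_upperExtension hbij hI).surjOn.mapsTo_invFunOn compl_upperHalf_subset_lowerHalf p

theorem arcInvolution_rho (hbij : BijOn μ arcA arcNegA) (hI : μ ptI = ptNegI) (p : Circle) :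
    arcInvolution μ (rho p) = rho (arcInvolution μ p) :=
  have hE := bijOn_upperExtension hbij hI
  piecewise_comp_eq_of_invOn hE.invOn_invFunOn hE.surjOn.mapsTo_invFunOn
    compl_upperHalf_subset_lowerHalf preimage_rho_upperHalf (fun _ => upperExtension_rho hI) p

theorem eq_arcInvolution (hbij : BijOn μ arcA arcNegA) (hI : μ ptI = ptNegI) {τ : Circle → Circle}
    (hτ : Involutive τ) (hτμ : EqOn τ μ arcA) (hτρ : ∀ p, τ (rho p) = rho (τ p)) :
    τ = arcInvolution μ :=
  have hE := bijOn_upperExtension hbij hI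
  eq_piecewise_of_involutive hτ
    (arcA_union_preimage_rho ▸ eqOn_piecewise_conj rho_involutive
      (fun _ hp hρp => apply_rho_eq_of_mem_arcA hI hp hρp) hτμ hτρ)
    hE.invOn_invFunOn.2 hE.surjOn.mapsTo_invFunOn compl_upperHalf_subset_lowerHalf

end Extension

/-- A continuous bijection `μ : A → -A` of the first-quadrant arc onto its antipodal
arc with `μ(1,0) = (-1,0)` extends uniquely to a continuous fixed-point-free
involution of the circle commuting with the reflection in the `z`-axis. -/
theorem extend_arc_map_to_involution
    (μ : Circle → Circle) (hcont : ContinuousOn μ arcA) (hbij : Set.BijOn μ arcA arcNegA)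
    (hone : μ ptOne = ptNegOne) :
    ∃! σ : Circle → Circle,
      Continuous σ ∧ (∀ p ∈ arcA, σ p = μ p) ∧ (∀ p, σ (σ p) = p) ∧
      (∀ p, σ p ≠ p) ∧ (∀ p, σ (rho p) = rho (σ p)) := by
  have hI : μ ptI = ptNegI := apply_ptI_eq_ptNegI hcont hbij hone
  refine ⟨arcInvolution μ, ⟨continuous_arcInvolution hcont hbij hone hI,
    fun _ hp => arcInvolution_eqOn_arcA hp, involutive_arcInvolution hbij hone hI,
    arcInvolution_ne_self hbij hone hI, arcInvolution_rho hbij hI⟩, ?_⟩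
  rintro τ ⟨-, hτμ, hτ, -, hτρ⟩
  exact eq_arcInvolution hbij hI hτ hτμ hτρ
end

section
/- Let a : [0,1) → [0,∞) be an increasing bijection with t² ≤ a(t)²/(1+a(t)²) for all t and lim_{t→0⁺} t²(1+a(t)²)/a(t)² = 1. Define c(t)² = a(t)² − t²(1+a(t)²). Then c(t)² ≥ 0 for all t, and for 0 < t₁ < t₂ < 1, the curves a(t₁)²x² − z² = c(t₁)² and a(t₂)²x² − z² = c(t₂)² have no common point (x,z) with x² + z² > 1. -/
open Set Filter

/-- Given an increasing bijection `a : [0,1) → [0,∞)` with `t² ≤ a(t)²/(1+a(t)²)` and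
`t²(1+a(t)²)/a(t)² → 1` as `t → 0⁺`, the quantity `c(t)² = a(t)² − t²(1+a(t)²)` is
nonnegative, and for `0 < t₁ < t₂ < 1` the curves `a(tᵢ)² x² − z² = c(tᵢ)²` have no
common point outside the closed unit disc. -/
theorem symmetric_gl_star_hyperbolas_disjoint_outside
    (a : ℝ → ℝ) (hmono : StrictMonoOn a (Ico (0:ℝ) 1))
    (hbij : Set.BijOn a (Ico (0:ℝ) 1) (Ici (0:ℝ)))
    (hineq : ∀ t ∈ Ico (0:ℝ) 1, t ^ 2 ≤ a t ^ 2 / (1 + a t ^ 2))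
    (hlim : Tendsto (fun t => t ^ 2 * (1 + a t ^ 2) / a t ^ 2)
      (nhdsWithin 0 (Ioi 0)) (nhds 1)) :
    (∀ t ∈ Ico (0:ℝ) 1, 0 ≤ a t ^ 2 - t ^ 2 * (1 + a t ^ 2)) ∧
    ∀ t₁ t₂ : ℝ, 0 < t₁ → t₁ < t₂ → t₂ < 1 →
      ∀ x z : ℝ,
        a t₁ ^ 2 * x ^ 2 - z ^ 2 = a t₁ ^ 2 - t₁ ^ 2 * (1 + a t₁ ^ 2) →
        a t₂ ^ 2 * x ^ 2 - z ^ 2 = a t₂ ^ 2 - t₂ ^ 2 * (1 + a t₂ ^ 2) →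
        ¬ (1 < x ^ 2 + z ^ 2) := by
  constructor
  · intro t ht
    have h := hineq t ht
    have hpos : (0:ℝ) < 1 + a t ^ 2 := by positivity
    rw [le_div_iff₀ hpos] at h
    linarith
  · intro t₁ t₂ h1 h12 h2 x z e1 e2 hcontra
    have ht₁ : t₁ ∈ Ico (0:ℝ) 1 := ⟨le_of_lt h1, lt_trans h12 h2⟩
    have ht₂ : t₂ ∈ Ico (0:ℝ) 1 := ⟨by linarith, h2⟩
    have ha1 : 0 ≤ a t₁ := hbij.mapsTo ht₁
    have halt : a t₁ < a t₂ := hmono ht₁ ht₂ h12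
    have hA : a t₁ ^ 2 < a t₂ ^ 2 := by nlinarith
    -- from e2 - e1: (A₂ - A₁)(1 - x²) = t₂²(1+A₂) - t₁²(1+A₁)
    -- hence (A₂ - A₁)(1 - t₁² - x²) = (t₂² - t₁²)(1 + A₂) > 0, so x² < 1 - t₁²
    have hx : x ^ 2 < 1 - t₁ ^ 2 := by
      nlinarith [mul_pos (sub_pos.2 h12) (by linarith : (0:ℝ) < t₁ + t₂),
        sq_nonneg (a t₂), mul_pos (sub_pos.2 hA)
          (by nlinarith [sq_nonneg (a t₂)] : (0:ℝ) < 1 + a t₂ ^ 2)]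
    -- from e1: x² + z² = (1 + A₁)(x² - 1 + t₁²) + 1 ≤ 1
    nlinarith [sq_nonneg (a t₁), mul_nonneg (sq_nonneg (a t₁)) (by linarith : (0:ℝ) ≤ 1 - t₁ ^ 2 - x ^ 2)]
end

section
/- The polynomial l(a) = 2x²a⁶ + 7x²a⁵ + (13x² − 2z² + z − 5)a⁴ + (12x² − 7z² − 5)a³ + (6x² − 13z² + z)a² − 12z²a − 6z² has exactly one positive real root for every pair (x,z) with x > 0, z ≠ 0 and x² + z² ≥ 1. -/
theorem pow_cross_le' {a b : ℝ} (ha : 0 < a) (hab : a ≤ b) (m k : ℕ) (h : m ≤ k) :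
    b ^ m * a ^ k ≤ a ^ m * b ^ k := by
  obtain ⟨d, rfl⟩ := Nat.exists_eq_add_of_le h
  have hb : 0 < b := ha.trans_le hab
  have h1 : a ^ d ≤ b ^ d := pow_le_pow_left₀ ha.le hab d
  have h2 : 0 ≤ a ^ m * b ^ m := by positivity
  calc b ^ m * a ^ (m + d) = (a ^ m * b ^ m) * a ^ d := by rw [pow_add]; ring
    _ ≤ (a ^ m * b ^ m) * b ^ d := mul_le_mul_of_nonneg_left h1 h2
    _ = a ^ m * b ^ (m + d) := by rw [pow_add]; ring

theorem pow_cross_lt' {a b : ℝ} (ha : 0 < a) (hab : a < b) (m k : ℕ) (h : m < k) :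
    b ^ m * a ^ k < a ^ m * b ^ k := by
  obtain ⟨d, rfl⟩ := Nat.exists_eq_add_of_le h.le
  have hd : d ≠ 0 := by rintro rfl; omega
  have h1 : a ^ d < b ^ d := pow_lt_pow_left₀ hab ha.le hd
  have hb : 0 < b := ha.trans hab
  have h2 : 0 < a ^ m * b ^ m := by positivity
  calc b ^ m * a ^ (m + d) = (a ^ m * b ^ m) * a ^ d := by rw [pow_add]; ring
    _ < (a ^ m * b ^ m) * b ^ d := by exact (mul_lt_mul_iff_right₀ h2).mpr h1
    _ = a ^ m * b ^ (m + d) := by rw [pow_add]; ring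

set_option maxHeartbeats 1000000 in
/-- The sextic `l(a)` from the example has exactly one positive root for every `(x,z)`
with `x > 0`, `z ≠ 0` and `x² + z² ≥ 1`. -/
theorem sextic_unique_positive_root
    (x z : ℝ) (hx : 0 < x) (hz : z ≠ 0) (hout : 1 ≤ x ^ 2 + z ^ 2) :
    ∃! a : ℝ, 0 < a ∧
      2 * x ^ 2 * a ^ 6 + 7 * x ^ 2 * a ^ 5 + (13 * x ^ 2 - 2 * z ^ 2 + z - 5) * a ^ 4
        + (12 * x ^ 2 - 7 * z ^ 2 - 5) * a ^ 3 + (6 * x ^ 2 - 13 * z ^ 2 + z) * a ^ 2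
        - 12 * z ^ 2 * a - 6 * z ^ 2 = 0 := by
  have L1 : 0 ≤ 12 * x ^ 2 - 7 * z ^ 2 - 5 → 0 < 13 * x ^ 2 - 2 * z ^ 2 + z - 5 := fun h => by
    nlinarith [sq_nonneg (67 * z + 6)]
  have L2 : 0 ≤ 6 * x ^ 2 - 13 * z ^ 2 + z → 0 < 12 * x ^ 2 - 7 * z ^ 2 - 5 := fun h => by
    linarith [mul_nonneg h (by linarith : (0:ℝ) ≤ x ^ 2 + z ^ 2 - 1),
      sq_nonneg (x ^ 2 + z ^ 2 - 1), sq_nonneg z, sq_nonneg (z - 1), sq_nonneg x,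
      sq_nonneg (x * z), mul_pos hx hx]
  have key : ∀ u v : ℝ, 0 < u → u < v →
      2 * x ^ 2 * u ^ 6 + 7 * x ^ 2 * u ^ 5 + (13 * x ^ 2 - 2 * z ^ 2 + z - 5) * u ^ 4 + (12 * x ^ 2 - 7 * z ^ 2 - 5) * u ^ 3 + (6 * x ^ 2 - 13 * z ^ 2 + z) * u ^ 2 - 12 * z ^ 2 * u - 6 * z ^ 2 = 0 →
      2 * x ^ 2 * v ^ 6 + 7 * x ^ 2 * v ^ 5 + (13 * x ^ 2 - 2 * z ^ 2 + z - 5) * v ^ 4 + (12 * x ^ 2 - 7 * z ^ 2 - 5) * v ^ 3 + (6 * x ^ 2 - 13 * z ^ 2 + z) * v ^ 2 - 12 * z ^ 2 * v - 6 * z ^ 2 = 0 → False := by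
    intro u v hu huv hfu hfv
    rcases le_or_gt 0 (6 * x ^ 2 - 13 * z ^ 2 + z) with h2 | h2
    · have h3 : 0 < 12 * x ^ 2 - 7 * z ^ 2 - 5 := L2 h2
      have h4 : 0 < 13 * x ^ 2 - 2 * z ^ 2 + z - 5 := L1 h3.le
      have w6 : 0 < 2 * x ^ 2 * (u ^ 2 * v ^ 6 - v ^ 2 * u ^ 6) :=
        mul_pos (by positivity) (sub_pos.mpr (pow_cross_lt' hu huv 2 6 (by norm_num)))
      have w5 : 0 ≤ 7 * x ^ 2 * (u ^ 2 * v ^ 5 - v ^ 2 * u ^ 5) :=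
        mul_nonneg (by positivity) (sub_nonneg.mpr (pow_cross_le' hu huv.le 2 5 (by norm_num)))
      have w4 : 0 ≤ (13 * x ^ 2 - 2 * z ^ 2 + z - 5) * (u ^ 2 * v ^ 4 - v ^ 2 * u ^ 4) :=
        mul_nonneg (h4.le) (sub_nonneg.mpr (pow_cross_le' hu huv.le 2 4 (by norm_num)))
      have w3 : 0 ≤ (12 * x ^ 2 - 7 * z ^ 2 - 5) * (u ^ 2 * v ^ 3 - v ^ 2 * u ^ 3) :=
        mul_nonneg (h3.le) (sub_nonneg.mpr (pow_cross_le' hu huv.le 2 3 (by norm_num)))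
      have w1 : 0 ≤ 12 * z ^ 2 * (u ^ 1 * v ^ 2 - v ^ 1 * u ^ 2) :=
        mul_nonneg (by positivity) (sub_nonneg.mpr (pow_cross_le' hu huv.le 1 2 (by norm_num)))
      have w0 : 0 ≤ 6 * z ^ 2 * (u ^ 0 * v ^ 2 - v ^ 0 * u ^ 2) :=
        mul_nonneg (by positivity) (sub_nonneg.mpr (pow_cross_le' hu huv.le 0 2 (by norm_num)))
      have E1 : u ^ 2 * (2 * x ^ 2 * v ^ 6 + 7 * x ^ 2 * v ^ 5 + (13 * x ^ 2 - 2 * z ^ 2 + z - 5) * v ^ 4 + (12 * x ^ 2 - 7 * z ^ 2 - 5) * v ^ 3 + (6 * x ^ 2 - 13 * z ^ 2 + z) * v ^ 2 - 12 * z ^ 2 * v - 6 * z ^ 2) = 0 := by rw [hfv, mul_zero]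
      have E2 : v ^ 2 * (2 * x ^ 2 * u ^ 6 + 7 * x ^ 2 * u ^ 5 + (13 * x ^ 2 - 2 * z ^ 2 + z - 5) * u ^ 4 + (12 * x ^ 2 - 7 * z ^ 2 - 5) * u ^ 3 + (6 * x ^ 2 - 13 * z ^ 2 + z) * u ^ 2 - 12 * z ^ 2 * u - 6 * z ^ 2) = 0 := by rw [hfu, mul_zero]
      linarith [E1, E2, w6, w5, w4, w3, w1, w0]
    rcases le_or_gt 0 (12 * x ^ 2 - 7 * z ^ 2 - 5) with h3 | h3
    · have h4 : 0 < 13 * x ^ 2 - 2 * z ^ 2 + z - 5 := L1 h3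
      have w6 : 0 < 2 * x ^ 2 * (u ^ 3 * v ^ 6 - v ^ 3 * u ^ 6) :=
        mul_pos (by positivity) (sub_pos.mpr (pow_cross_lt' hu huv 3 6 (by norm_num)))
      have w5 : 0 ≤ 7 * x ^ 2 * (u ^ 3 * v ^ 5 - v ^ 3 * u ^ 5) :=
        mul_nonneg (by positivity) (sub_nonneg.mpr (pow_cross_le' hu huv.le 3 5 (by norm_num)))
      have w4 : 0 ≤ (13 * x ^ 2 - 2 * z ^ 2 + z - 5) * (u ^ 3 * v ^ 4 - v ^ 3 * u ^ 4) :=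
        mul_nonneg (h4.le) (sub_nonneg.mpr (pow_cross_le' hu huv.le 3 4 (by norm_num)))
      have w2 : 0 ≤ (-(6 * x ^ 2 - 13 * z ^ 2 + z)) * (u ^ 2 * v ^ 3 - v ^ 2 * u ^ 3) :=
        mul_nonneg (by linarith) (sub_nonneg.mpr (pow_cross_le' hu huv.le 2 3 (by norm_num)))
      have w1 : 0 ≤ 12 * z ^ 2 * (u ^ 1 * v ^ 3 - v ^ 1 * u ^ 3) :=
        mul_nonneg (by positivity) (sub_nonneg.mpr (pow_cross_le' hu huv.le 1 3 (by norm_num)))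
      have w0 : 0 ≤ 6 * z ^ 2 * (u ^ 0 * v ^ 3 - v ^ 0 * u ^ 3) :=
        mul_nonneg (by positivity) (sub_nonneg.mpr (pow_cross_le' hu huv.le 0 3 (by norm_num)))
      have E1 : u ^ 3 * (2 * x ^ 2 * v ^ 6 + 7 * x ^ 2 * v ^ 5 + (13 * x ^ 2 - 2 * z ^ 2 + z - 5) * v ^ 4 + (12 * x ^ 2 - 7 * z ^ 2 - 5) * v ^ 3 + (6 * x ^ 2 - 13 * z ^ 2 + z) * v ^ 2 - 12 * z ^ 2 * v - 6 * z ^ 2) = 0 := by rw [hfv, mul_zero]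
      have E2 : v ^ 3 * (2 * x ^ 2 * u ^ 6 + 7 * x ^ 2 * u ^ 5 + (13 * x ^ 2 - 2 * z ^ 2 + z - 5) * u ^ 4 + (12 * x ^ 2 - 7 * z ^ 2 - 5) * u ^ 3 + (6 * x ^ 2 - 13 * z ^ 2 + z) * u ^ 2 - 12 * z ^ 2 * u - 6 * z ^ 2) = 0 := by rw [hfu, mul_zero]
      linarith [E1, E2, w6, w5, w4, w2, w1, w0]
    rcases le_or_gt 0 (13 * x ^ 2 - 2 * z ^ 2 + z - 5) with h4 | h4
    · have w6 : 0 < 2 * x ^ 2 * (u ^ 4 * v ^ 6 - v ^ 4 * u ^ 6) :=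
        mul_pos (by positivity) (sub_pos.mpr (pow_cross_lt' hu huv 4 6 (by norm_num)))
      have w5 : 0 ≤ 7 * x ^ 2 * (u ^ 4 * v ^ 5 - v ^ 4 * u ^ 5) :=
        mul_nonneg (by positivity) (sub_nonneg.mpr (pow_cross_le' hu huv.le 4 5 (by norm_num)))
      have w3 : 0 ≤ (-(12 * x ^ 2 - 7 * z ^ 2 - 5)) * (u ^ 3 * v ^ 4 - v ^ 3 * u ^ 4) :=
        mul_nonneg (by linarith) (sub_nonneg.mpr (pow_cross_le' hu huv.le 3 4 (by norm_num)))
      have w2 : 0 ≤ (-(6 * x ^ 2 - 13 * z ^ 2 + z)) * (u ^ 2 * v ^ 4 - v ^ 2 * u ^ 4) :=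
        mul_nonneg (by linarith) (sub_nonneg.mpr (pow_cross_le' hu huv.le 2 4 (by norm_num)))
      have w1 : 0 ≤ 12 * z ^ 2 * (u ^ 1 * v ^ 4 - v ^ 1 * u ^ 4) :=
        mul_nonneg (by positivity) (sub_nonneg.mpr (pow_cross_le' hu huv.le 1 4 (by norm_num)))
      have w0 : 0 ≤ 6 * z ^ 2 * (u ^ 0 * v ^ 4 - v ^ 0 * u ^ 4) :=
        mul_nonneg (by positivity) (sub_nonneg.mpr (pow_cross_le' hu huv.le 0 4 (by norm_num)))
      have E1 : u ^ 4 * (2 * x ^ 2 * v ^ 6 + 7 * x ^ 2 * v ^ 5 + (13 * x ^ 2 - 2 * z ^ 2 + z - 5) * v ^ 4 + (12 * x ^ 2 - 7 * z ^ 2 - 5) * v ^ 3 + (6 * x ^ 2 - 13 * z ^ 2 + z) * v ^ 2 - 12 * z ^ 2 * v - 6 * z ^ 2) = 0 := by rw [hfv, mul_zero]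
      have E2 : v ^ 4 * (2 * x ^ 2 * u ^ 6 + 7 * x ^ 2 * u ^ 5 + (13 * x ^ 2 - 2 * z ^ 2 + z - 5) * u ^ 4 + (12 * x ^ 2 - 7 * z ^ 2 - 5) * u ^ 3 + (6 * x ^ 2 - 13 * z ^ 2 + z) * u ^ 2 - 12 * z ^ 2 * u - 6 * z ^ 2) = 0 := by rw [hfu, mul_zero]
      linarith [E1, E2, w6, w5, w3, w2, w1, w0]
    have w6 : 0 < 2 * x ^ 2 * (u ^ 5 * v ^ 6 - v ^ 5 * u ^ 6) :=
      mul_pos (by positivity) (sub_pos.mpr (pow_cross_lt' hu huv 5 6 (by norm_num)))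
    have w4 : 0 ≤ (-(13 * x ^ 2 - 2 * z ^ 2 + z - 5)) * (u ^ 4 * v ^ 5 - v ^ 4 * u ^ 5) :=
      mul_nonneg (by linarith) (sub_nonneg.mpr (pow_cross_le' hu huv.le 4 5 (by norm_num)))
    have w3 : 0 ≤ (-(12 * x ^ 2 - 7 * z ^ 2 - 5)) * (u ^ 3 * v ^ 5 - v ^ 3 * u ^ 5) :=
      mul_nonneg (by linarith) (sub_nonneg.mpr (pow_cross_le' hu huv.le 3 5 (by norm_num)))
    have w2 : 0 ≤ (-(6 * x ^ 2 - 13 * z ^ 2 + z)) * (u ^ 2 * v ^ 5 - v ^ 2 * u ^ 5) :=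
      mul_nonneg (by linarith) (sub_nonneg.mpr (pow_cross_le' hu huv.le 2 5 (by norm_num)))
    have w1 : 0 ≤ 12 * z ^ 2 * (u ^ 1 * v ^ 5 - v ^ 1 * u ^ 5) :=
      mul_nonneg (by positivity) (sub_nonneg.mpr (pow_cross_le' hu huv.le 1 5 (by norm_num)))
    have w0 : 0 ≤ 6 * z ^ 2 * (u ^ 0 * v ^ 5 - v ^ 0 * u ^ 5) :=
      mul_nonneg (by positivity) (sub_nonneg.mpr (pow_cross_le' hu huv.le 0 5 (by norm_num)))
    have E1 : u ^ 5 * (2 * x ^ 2 * v ^ 6 + 7 * x ^ 2 * v ^ 5 + (13 * x ^ 2 - 2 * z ^ 2 + z - 5) * v ^ 4 + (12 * x ^ 2 - 7 * z ^ 2 - 5) * v ^ 3 + (6 * x ^ 2 - 13 * z ^ 2 + z) * v ^ 2 - 12 * z ^ 2 * v - 6 * z ^ 2) = 0 := by rw [hfv, mul_zero]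
    have E2 : v ^ 5 * (2 * x ^ 2 * u ^ 6 + 7 * x ^ 2 * u ^ 5 + (13 * x ^ 2 - 2 * z ^ 2 + z - 5) * u ^ 4 + (12 * x ^ 2 - 7 * z ^ 2 - 5) * u ^ 3 + (6 * x ^ 2 - 13 * z ^ 2 + z) * u ^ 2 - 12 * z ^ 2 * u - 6 * z ^ 2) = 0 := by rw [hfu, mul_zero]
    linarith [E1, E2, w6, w4, w3, w2, w1, w0]
  -- existence
  obtain ⟨M, hMdef⟩ : ∃ M : ℝ, M = 1 + (41 * z ^ 2 + 11) / x ^ 2 := ⟨_, rfl⟩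
  have hx2 : (0:ℝ) < x ^ 2 := by positivity
  have hM1 : 1 ≤ M := by rw [hMdef]; exact le_add_of_nonneg_right (by positivity)
  have hM0 : (0:ℝ) < M := lt_of_lt_of_le one_pos hM1
  have hxm : x ^ 2 * M = x ^ 2 + (41 * z ^ 2 + 11) := by
    rw [hMdef]; field_simp
  have m45 : M ^ 4 ≤ M ^ 5 := pow_le_pow_right₀ hM1 (by norm_num)
  have m35 : M ^ 3 ≤ M ^ 5 := pow_le_pow_right₀ hM1 (by norm_num)
  have m25 : M ^ 2 ≤ M ^ 5 := pow_le_pow_right₀ hM1 (by norm_num)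
  have m15 : M ≤ M ^ 5 := by calc M = M ^ 1 := (pow_one M).symm
                                 _ ≤ M ^ 5 := pow_le_pow_right₀ hM1 (by norm_num)
  have m05 : 1 ≤ M ^ 5 := one_le_pow₀ hM1
  have t6 : 2 * x ^ 2 * M ^ 6 = 2 * (x ^ 2 + (41 * z ^ 2 + 11)) * M ^ 5 := by
    linear_combination 2 * M ^ 5 * hxm
  have t4 : 0 ≤ (13 * x ^ 2 - 2 * z ^ 2 + z - 5) * M ^ 4 + (5 * z ^ 2 + 11) / 2 * M ^ 5 := by
    have c : 0 ≤ 13 * x ^ 2 - 2 * z ^ 2 + z - 5 + (5 * z ^ 2 + 11) / 2 := by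
      nlinarith [sq_nonneg (z + 1), sq_nonneg x]
    linarith [mul_nonneg c (pow_nonneg hM0.le 4),
      mul_nonneg (show (0:ℝ) ≤ (5 * z ^ 2 + 11) / 2 by positivity) (sub_nonneg.mpr m45)]
  have t3 : 0 ≤ (12 * x ^ 2 - 7 * z ^ 2 - 5) * M ^ 3 + (7 * z ^ 2 + 5) * M ^ 5 := by
    have c : 0 ≤ 12 * x ^ 2 - 7 * z ^ 2 - 5 + (7 * z ^ 2 + 5) := by linarith
    linarith [mul_nonneg c (pow_nonneg hM0.le 3),
      mul_nonneg (show (0:ℝ) ≤ 7 * z ^ 2 + 5 by positivity) (sub_nonneg.mpr m35)]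
  have t2 : 0 ≤ (6 * x ^ 2 - 13 * z ^ 2 + z) * M ^ 2 + (27 * z ^ 2 + 1) / 2 * M ^ 5 := by
    have c : 0 ≤ 6 * x ^ 2 - 13 * z ^ 2 + z + (27 * z ^ 2 + 1) / 2 := by
      nlinarith [sq_nonneg (z + 1), sq_nonneg x]
    linarith [mul_nonneg c (pow_nonneg hM0.le 2),
      mul_nonneg (show (0:ℝ) ≤ (27 * z ^ 2 + 1) / 2 by positivity) (sub_nonneg.mpr m25)]
  have t1 : 0 ≤ -(12 * z ^ 2 * M) + 12 * z ^ 2 * M ^ 5 := by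
    linarith [mul_nonneg (show (0:ℝ) ≤ 12 * z ^ 2 by positivity) (sub_nonneg.mpr m15)]
  have t0 : 0 ≤ -(6 * z ^ 2) + 6 * z ^ 2 * M ^ 5 := by
    linarith [mul_nonneg (show (0:ℝ) ≤ 6 * z ^ 2 by positivity) (sub_nonneg.mpr m05)]
  have hfin : (0:ℝ) < (9 * x ^ 2 + 41 * z ^ 2 + 11) * M ^ 5 := by positivity
  have hFM : (0:ℝ) < 2 * x ^ 2 * M ^ 6 + 7 * x ^ 2 * M ^ 5 + (13 * x ^ 2 - 2 * z ^ 2 + z - 5) * M ^ 4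
      + (12 * x ^ 2 - 7 * z ^ 2 - 5) * M ^ 3 + (6 * x ^ 2 - 13 * z ^ 2 + z) * M ^ 2
      - 12 * z ^ 2 * M - 6 * z ^ 2 := by
    nlinarith [t6, t4, t3, t2, t1, t0, hfin, mul_nonneg (mul_pos hx2 hM0).le (pow_nonneg hM0.le 4)]
  have hzz : (0:ℝ) < z ^ 2 := by positivity
  have h0mem : (0:ℝ) ∈ (fun a : ℝ => 2 * x ^ 2 * a ^ 6 + 7 * x ^ 2 * a ^ 5
      + (13 * x ^ 2 - 2 * z ^ 2 + z - 5) * a ^ 4 + (12 * x ^ 2 - 7 * z ^ 2 - 5) * a ^ 3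
      + (6 * x ^ 2 - 13 * z ^ 2 + z) * a ^ 2 - 12 * z ^ 2 * a - 6 * z ^ 2) '' Set.Ioo 0 M := by
    apply intermediate_value_Ioo hM0.le (Continuous.continuousOn (by continuity))
    constructor
    · show 2 * x ^ 2 * (0:ℝ) ^ 6 + 7 * x ^ 2 * (0:ℝ) ^ 5 + (13 * x ^ 2 - 2 * z ^ 2 + z - 5) * (0:ℝ) ^ 4
        + (12 * x ^ 2 - 7 * z ^ 2 - 5) * (0:ℝ) ^ 3 + (6 * x ^ 2 - 13 * z ^ 2 + z) * (0:ℝ) ^ 2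
        - 12 * z ^ 2 * 0 - 6 * z ^ 2 < 0
      nlinarith [hzz]
    · exact hFM
  obtain ⟨a₀, haIoo, ha₀⟩ := h0mem
  refine ⟨a₀, ⟨haIoo.1, ha₀⟩, ?_⟩
  intro y hy
  rcases lt_trichotomy y a₀ with hlt | heq | hgt
  · exact absurd (key y a₀ hy.1 hlt hy.2 ha₀) id
  · exact heq
  · exact absurd (key a₀ y haIoo.1 hgt ha₀ hy.2) id
end
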